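/- arXiv:2505.11747 — 2 statements merged into one kernel-verified Lean document; each statement's English description precedes it below -/
import Mathlib

section
/- For any signs ε₁, ε₂ ∈ {1,−1}, the real Cayley–Dickson algebra 𝔸₂ with sign vector (ε₁,ε₂) is isomorphic as an ℝ-algebra to the quaternion algebra ℍ[ℝ, −ε₁, −ε₂], i.e. the ℝ-algebra with basis 1, i, j, k satisfying i² = −ε₁, j² = −ε₂, i·j = k and i·j = −j·i. -/
noncomputable section

/-- The real Cayley–Dickson algebra carrier: `CD 0 = ℝ`, `CD (n+1) = CD n × CD n`. -/
def CD : ℕ → Type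
  | 0 => ℝ
  | n + 1 => CD n × CD n

instance CD.instAddCommGroup : (n : ℕ) → AddCommGroup (CD n)
  | 0 => inferInstanceAs (AddCommGroup ℝ)
  | n + 1 =>
    letI := CD.instAddCommGroup n
    inferInstanceAs (AddCommGroup (CD n × CD n))

instance CD.instModule : (n : ℕ) → Module ℝ (CD n)
  | 0 => inferInstanceAs (Module ℝ ℝ)
  | n + 1 =>
    letI := CD.instModule n
    inferInstanceAs (Module ℝ (CD n × CD n))

/-- The unit of the Cayley–Dickson algebra. -/
def CD.one : (n : ℕ) → CD n
  | 0 => (1 : ℝ)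
  | n + 1 => (CD.one n, 0)

/-- Conjugation: `(a, b)* = (a*, -b)`, identity on `ℝ`. -/
def CD.conj : (n : ℕ) → CD n → CD n
  | 0, a => a
  | n + 1, x => (CD.conj n x.1, -x.2)

/-- Cayley–Dickson multiplication with sign vector `ε`:
`(a,b)·(c,d) = (a·c − ε (n+1) • (d*·b), d·a + b·c*)`. -/
def CD.mul (ε : ℕ → ℝ) : (n : ℕ) → CD n → CD n → CD n
  | 0, a, c => (show ℝ from a) * (show ℝ from c)
  | n + 1, x, y =>
    (CD.mul ε n x.1 y.1 - ε (n + 1) • CD.mul ε n (CD.conj n y.2) x.2,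
     CD.mul ε n y.2 x.1 + CD.mul ε n x.2 (CD.conj n y.1))

/-- The standard basis element `e α` of `CD n`, for `α ⊆ {1,…,n}`. -/
def CD.basis : (n : ℕ) → Finset ℕ → CD n
  | 0, _ => (1 : ℝ)
  | n + 1, α =>
    if n + 1 ∈ α then ((0 : CD n), CD.basis n (α.erase (n + 1)))
    else (CD.basis n α, (0 : CD n))

/-- `α` indexes a pure basis element of `CD n`. -/
def CD.IsPure (n : ℕ) (α : Finset ℕ) : Prop :=
  α.Nonempty ∧ α ⊆ Finset.Icc 1 n

/-- The associator `[x,y,z] = (x·y)·z − x·(y·z)`. -/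
def CD.assoc (ε : ℕ → ℝ) (n : ℕ) (x y z : CD n) : CD n :=
  CD.mul ε n (CD.mul ε n x y) z - CD.mul ε n x (CD.mul ε n y z)

/-- A triad: indices of three pairwise distinct pure basis elements `b, c, d`
with `d ≠ ±(b·c)` (all signs `εᵢ = 1`). -/
def CD.IsTriad (n : ℕ) (α β γ : Finset ℕ) : Prop :=
  CD.IsPure n α ∧ CD.IsPure n β ∧ CD.IsPure n γ ∧
  α ≠ β ∧ α ≠ γ ∧ β ≠ γ ∧
  CD.basis n γ ≠ CD.mul (fun _ => 1) n (CD.basis n α) (CD.basis n β) ∧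
  CD.basis n γ ≠ -CD.mul (fun _ => 1) n (CD.basis n α) (CD.basis n β)

/-- Multiplication with all signs `εᵢ = 1`. -/
abbrev CD.mul1 (n : ℕ) : CD n → CD n → CD n := CD.mul (fun _ => 1) n

/-- Associator with all signs `εᵢ = 1`. -/
abbrev CD.assoc1 (n : ℕ) : CD n → CD n → CD n → CD n := CD.assoc (fun _ => 1) n

/-!
Read `((a, b), (c, d)) ∈ 𝔸₂` as `a + b i + c j + d k`. Since conjugation is the identity on
`𝔸₀ = ℝ`, unfolding the doubling formula twice gives the product of `𝔸₂` in these coordinates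
definitionally; it agrees with the product of `ℍ[ℝ, -ε₁, 0, -ε₂]` by a polynomial identity.
-/

namespace CD

def quaternionEquiv (c₁ c₂ c₃ : ℝ) : CD 2 ≃ₗ[ℝ] QuaternionAlgebra ℝ c₁ c₂ c₃ where
  toFun x := ⟨x.1.1, x.1.2, x.2.1, x.2.2⟩
  invFun q := ((q.re, q.imI), (q.imJ, q.imK))
  map_add' _ _ := rfl
  map_smul' _ _ := rfl
  left_inv _ := rfl
  right_inv _ := rfl

lemma quaternionEquiv_one (c₁ c₂ c₃ : ℝ) : quaternionEquiv c₁ c₂ c₃ (CD.one 2) = 1 := rfl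

lemma quaternionEquiv_mul (ε : ℕ → ℝ) (x y : CD 2) :
    quaternionEquiv (-ε 1) 0 (-ε 2) (CD.mul ε 2 x y) =
      quaternionEquiv (-ε 1) 0 (-ε 2) x * quaternionEquiv (-ε 1) 0 (-ε 2) y := by
  set e := quaternionEquiv (-ε 1) 0 (-ε 2)
  obtain ⟨p, rfl⟩ := e.symm.surjective x
  obtain ⟨q, rfl⟩ := e.symm.surjective y
  have table : e (CD.mul ε 2 (e.symm p) (e.symm q)) =
      ⟨p.re * q.re - ε 1 * (q.imI * p.imI) - ε 2 * (q.imJ * p.imJ - ε 1 * (p.imK * -q.imK)),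
       q.imI * p.re + p.imI * q.re - ε 2 * (p.imK * q.imJ + -q.imK * p.imJ),
       q.imJ * p.re - ε 1 * (p.imI * q.imK) + (p.imJ * q.re - ε 1 * (-q.imI * p.imK)),
       p.imI * q.imJ + q.imK * p.re + (-q.imI * p.imJ + p.imK * q.re)⟩ := rfl
  rw [table, e.apply_symm_apply, e.apply_symm_apply]
  ext <;>
    simp only [QuaternionAlgebra.re_mul, QuaternionAlgebra.imI_mul, QuaternionAlgebra.imJ_mul,
      QuaternionAlgebra.imK_mul] <;>
    ring

end CD

theorem stmt3_general (ε : ℕ → ℝ) :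
    ∃ f : CD 2 ≃ₗ[ℝ] QuaternionAlgebra ℝ (-ε 1) 0 (-ε 2),
      f (CD.one 2) = 1 ∧ ∀ x y : CD 2, f (CD.mul ε 2 x y) = f x * f y :=
  ⟨CD.quaternionEquiv _ _ _, CD.quaternionEquiv_one _ _ _, CD.quaternionEquiv_mul ε⟩

/-- For signs `ε₁, ε₂ ∈ {1,−1}`, the Cayley–Dickson algebra `𝔸₂`
with sign vector `(ε₁,ε₂)` is ℝ-algebra isomorphic to `ℍ[ℝ, −ε₁, −ε₂]`. -/
theorem stmt3 (ε : ℕ → ℝ) (h1 : ε 1 = 1 ∨ ε 1 = -1) (h2 : ε 2 = 1 ∨ ε 2 = -1) :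
    ∃ f : CD 2 ≃ₗ[ℝ] QuaternionAlgebra ℝ (-ε 1) 0 (-ε 2),
      f (CD.one 2) = 1 ∧ ∀ x y : CD 2, f (CD.mul ε 2 x y) = f x * f y :=
  stmt3_general ε
end
end

section
/- With all signs εᵢ = 1, for any two distinct pure basis elements x, y of the real Cayley–Dickson algebra 𝔸ₙ one has (y·x)·x = −y, x·(x·y) = −y, and the flexible law (x·y)·x = x·(y·x). -/
noncomputable section

/-!
Every basis element `e` of `𝔸ₙ` satisfies `e* = ±e`, and multiplication by `e*` undoes
multiplication by `e` on either side: `e*(e c) = c` and `(c e) e* = c` for every `c`, not just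
for basis elements. Stated for arbitrary `c`, these identities and flexibility `(e c) e = e (c e)`
pass from `𝔸ₙ` to `𝔸ₙ₊₁`, whose basis elements are `(e, 0)` and `(0, e)`: expanding the
Cayley–Dickson product leaves only products of the same shape in `𝔸ₙ`. For a pure basis element,
`e* = -e`, which turns the two cancellation identities into `(y x) x = -y` and `x (x y) = -y`.
-/

namespace CD

/- Computations in `CD (n + 1)` go through these projection lemmas: a pair literal has type
`CD n × CD n`, which `simp` and `rw` do not match against `CD (n + 1)`. -/
section Projections

variable {n : ℕ} (x y : CD (n + 1))

theorem fst_zero : (0 : CD (n + 1)).1 = 0 := rfl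
theorem snd_zero : (0 : CD (n + 1)).2 = 0 := rfl
theorem fst_neg : (-x).1 = -x.1 := rfl
theorem snd_neg : (-x).2 = -x.2 := rfl
theorem fst_conj : (conj (n + 1) x).1 = conj n x.1 := rfl
theorem snd_conj : (conj (n + 1) x).2 = -x.2 := rfl
theorem fst_mul (ε : ℕ → ℝ) :
    (mul ε (n + 1) x y).1 = mul ε n x.1 y.1 - ε (n + 1) • mul ε n (conj n y.2) x.2 := rfl
theorem snd_mul (ε : ℕ → ℝ) :
    (mul ε (n + 1) x y).2 = mul ε n y.2 x.1 + mul ε n x.2 (conj n y.1) := rfl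

theorem fst_mul1 : (mul1 (n + 1) x y).1 = mul1 n x.1 y.1 - mul1 n (conj n y.2) x.2 :=
  (fst_mul x y _).trans (by rw [one_smul])

theorem snd_mul1 : (mul1 (n + 1) x y).2 = mul1 n y.2 x.1 + mul1 n x.2 (conj n y.1) := rfl

end Projections

theorem conj_zero : ∀ n, conj n (0 : CD n) = 0
  | 0 => rfl
  | n + 1 => Prod.ext (conj_zero n) neg_zero

theorem conj_neg : ∀ {n} (x : CD n), conj n (-x) = -conj n x
  | 0, _ => rfl
  | _ + 1, x => Prod.ext (conj_neg x.1) rfl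

theorem conj_add : ∀ {n} (x y : CD n), conj n (x + y) = conj n x + conj n y
  | 0, _, _ => rfl
  | _ + 1, x, y => Prod.ext (conj_add x.1 y.1) (neg_add x.2 y.2)

theorem conj_sub {n : ℕ} (x y : CD n) : conj n (x - y) = conj n x - conj n y := by
  rw [sub_eq_add_neg, conj_add, conj_neg, sub_eq_add_neg]

theorem conj_smul : ∀ {n} (r : ℝ) (x : CD n), conj n (r • x) = r • conj n x
  | 0, _, _ => rfl
  | _ + 1, r, x => Prod.ext (conj_smul r x.1) (smul_neg r x.2).symm

theorem conj_conj : ∀ {n} (x : CD n), conj n (conj n x) = x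
  | 0, _ => rfl
  | _ + 1, x => Prod.ext (conj_conj x.1) (neg_neg x.2)

theorem mul_zero_and_zero_mul (ε : ℕ → ℝ) :
    ∀ {n} (x : CD n), mul ε n x 0 = 0 ∧ mul ε n 0 x = 0
  | 0, x => ⟨mul_zero (show ℝ from x), zero_mul (show ℝ from x)⟩
  | n + 1, x => by
    have ih := @mul_zero_and_zero_mul ε n
    refine ⟨Prod.ext ?_ ?_, Prod.ext ?_ ?_⟩ <;>
      simp only [fst_mul, snd_mul, fst_zero, snd_zero, conj_zero, (ih _).1, (ih _).2, smul_zero,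
        sub_zero, add_zero]

protected theorem mul_zero (ε : ℕ → ℝ) {n : ℕ} (x : CD n) : mul ε n x 0 = 0 :=
  (mul_zero_and_zero_mul ε x).1

protected theorem zero_mul (ε : ℕ → ℝ) {n : ℕ} (x : CD n) : mul ε n 0 x = 0 :=
  (mul_zero_and_zero_mul ε x).2

theorem mul_neg_and_neg_mul (ε : ℕ → ℝ) :
    ∀ {n} (x y : CD n), mul ε n x (-y) = -mul ε n x y ∧ mul ε n (-x) y = -mul ε n x y
  | 0, x, y => ⟨mul_neg (show ℝ from x) (show ℝ from y), neg_mul (show ℝ from x) (show ℝ from y)⟩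
  | n + 1, x, y => by
    have ih := @mul_neg_and_neg_mul ε n
    refine ⟨Prod.ext ?_ ?_, Prod.ext ?_ ?_⟩ <;>
      simp only [fst_mul, snd_mul, fst_neg, snd_neg, conj_neg, (ih _ _).1, (ih _ _).2, smul_neg,
        neg_sub', neg_add]

protected theorem mul_neg (ε : ℕ → ℝ) {n : ℕ} (x y : CD n) : mul ε n x (-y) = -mul ε n x y :=
  (mul_neg_and_neg_mul ε x y).1

protected theorem neg_mul (ε : ℕ → ℝ) {n : ℕ} (x y : CD n) : mul ε n (-x) y = -mul ε n x y :=
  (mul_neg_and_neg_mul ε x y).2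

theorem conj_mul (ε : ℕ → ℝ) :
    ∀ {n} (x y : CD n), conj n (mul ε n x y) = mul ε n (conj n y) (conj n x)
  | 0, x, y => mul_comm (show ℝ from x) (show ℝ from y)
  | n + 1, x, y => by
    have ih := @conj_mul ε n
    refine Prod.ext ?_ ?_
    · simp only [fst_mul, fst_conj, snd_conj, conj_sub, conj_smul, ih, conj_conj, conj_neg,
        CD.mul_neg, CD.neg_mul, neg_neg]
    · simp only [snd_mul, fst_conj, snd_conj, conj_conj, CD.neg_mul]
      abel

section SelfConjugate

variable {n : ℕ} {a : CD n}

theorem mul_conj_mul_of_conj_mul_mul (ha : conj n a = a ∨ conj n a = -a)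
    (h : ∀ c, mul1 n (conj n a) (mul1 n a c) = c) (c : CD n) :
    mul1 n a (mul1 n (conj n a) c) = c := by
  rcases ha with ha | ha <;> rw [ha] at h ⊢
  · exact h c
  · simpa only [CD.mul_neg, CD.neg_mul] using h c

theorem mul_mul_conj_of_mul_conj_mul (ha : conj n a = a ∨ conj n a = -a)
    (h : ∀ c, mul1 n (mul1 n c a) (conj n a) = c) (c : CD n) :
    mul1 n (mul1 n c (conj n a)) a = c := by
  rcases ha with ha | ha <;> rw [ha] at h ⊢
  · exact h c
  · simpa only [CD.mul_neg, CD.neg_mul] using h c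

end SelfConjugate

theorem basis_succ (n : ℕ) (α : Finset ℕ) :
    basis (n + 1) α =
      if n + 1 ∈ α then ((0 : CD n), basis n (α.erase (n + 1))) else (basis n α, 0) := rfl

section Basis

variable {n : ℕ} {α : Finset ℕ}

theorem basis_succ_of_mem (h : n + 1 ∈ α) :
    (basis (n + 1) α).1 = 0 ∧ (basis (n + 1) α).2 = basis n (α.erase (n + 1)) := by
  rw [basis_succ, if_pos h]
  exact ⟨rfl, rfl⟩

theorem basis_succ_of_notMem (h : n + 1 ∉ α) :
    (basis (n + 1) α).1 = basis n α ∧ (basis (n + 1) α).2 = 0 := by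
  rw [basis_succ, if_neg h]
  exact ⟨rfl, rfl⟩

end Basis

theorem basis_succ_cases (n : ℕ) (α : Finset ℕ) : ∃ β,
    ((basis (n + 1) α).1 = basis n β ∧ (basis (n + 1) α).2 = 0) ∨
      ((basis (n + 1) α).1 = 0 ∧ (basis (n + 1) α).2 = basis n β) := by
  by_cases hα : n + 1 ∈ α
  · exact ⟨_, .inr (basis_succ_of_mem hα)⟩
  · exact ⟨_, .inl (basis_succ_of_notMem hα)⟩

theorem conj_basis_eq_or_eq_neg : ∀ (n : ℕ) (α : Finset ℕ),
    conj n (basis n α) = basis n α ∨ conj n (basis n α) = -basis n α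
  | 0, _ => .inl rfl
  | n + 1, α => by
    obtain ⟨β, ⟨hfst, hsnd⟩ | ⟨hfst, -⟩⟩ := basis_succ_cases n α
    · rcases conj_basis_eq_or_eq_neg n β with h | h
      · refine .inl (Prod.ext ?_ ?_) <;> simp only [fst_conj, snd_conj, hfst, hsnd, h, neg_zero]
      · refine .inr (Prod.ext ?_ ?_) <;>
          simp only [fst_conj, snd_conj, fst_neg, snd_neg, hfst, hsnd, h, neg_zero]
    · exact .inr (Prod.ext (by simp only [fst_conj, fst_neg, hfst, conj_zero, neg_zero]) rfl)

theorem conj_basis_mul_mul_and_mul_mul_conj_basis : ∀ (n : ℕ) (α : Finset ℕ) (c : CD n),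
    mul1 n (conj n (basis n α)) (mul1 n (basis n α) c) = c ∧
      mul1 n (mul1 n c (basis n α)) (conj n (basis n α)) = c
  | 0, _, c =>
    ⟨(one_mul _).trans (one_mul (show ℝ from c)), (mul_one _).trans (mul_one (show ℝ from c))⟩
  | n + 1, α, c => by
    have ih₁ (β) := fun c => (conj_basis_mul_mul_and_mul_mul_conj_basis n β c).1
    have ih₂ (β) := fun c => (conj_basis_mul_mul_and_mul_mul_conj_basis n β c).2
    have ih₁' (β) := mul_conj_mul_of_conj_mul_mul (conj_basis_eq_or_eq_neg n β) (ih₁ β)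
    have ih₂' (β) := mul_mul_conj_of_mul_conj_mul (conj_basis_eq_or_eq_neg n β) (ih₂ β)
    obtain ⟨β, ⟨hfst, hsnd⟩ | ⟨hfst, hsnd⟩⟩ := basis_succ_cases n α <;>
      refine ⟨Prod.ext ?_ ?_, Prod.ext ?_ ?_⟩ <;>
      simp only [fst_mul1, snd_mul1, fst_conj, snd_conj, hfst, hsnd, conj_zero, conj_neg,
        conj_mul, conj_conj, CD.mul_zero, CD.zero_mul, CD.mul_neg, CD.neg_mul, neg_neg, neg_zero,
        sub_zero, zero_sub, add_zero, zero_add, ih₁, ih₂, ih₁', ih₂']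

section

variable {n : ℕ} (α : Finset ℕ) (c : CD n)

theorem conj_basis_mul_mul : mul1 n (conj n (basis n α)) (mul1 n (basis n α) c) = c :=
  (conj_basis_mul_mul_and_mul_mul_conj_basis n α c).1

theorem mul_mul_conj_basis : mul1 n (mul1 n c (basis n α)) (conj n (basis n α)) = c :=
  (conj_basis_mul_mul_and_mul_mul_conj_basis n α c).2

theorem mul_conj_basis_mul : mul1 n (mul1 n c (conj n (basis n α))) (basis n α) = c :=
  mul_mul_conj_of_mul_conj_mul (conj_basis_eq_or_eq_neg n α) (mul_mul_conj_basis α) c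

end

theorem flexible_basis : ∀ (n : ℕ) (α : Finset ℕ) (c : CD n),
    mul1 n (mul1 n (basis n α) c) (basis n α) = mul1 n (basis n α) (mul1 n c (basis n α))
  | 0, _, c => mul_assoc (1 : ℝ) (show ℝ from c) 1
  | n + 1, α, c => by
    have ih := flexible_basis n
    obtain ⟨β, ⟨hfst, hsnd⟩ | ⟨hfst, hsnd⟩⟩ := basis_succ_cases n α <;>
      refine Prod.ext ?_ ?_ <;>
      simp only [fst_mul1, snd_mul1, hfst, hsnd, conj_zero, conj_neg, conj_mul, conj_conj,
        CD.mul_zero, CD.zero_mul, CD.mul_neg, neg_zero, sub_zero, zero_sub,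
        add_zero, zero_add, ih, conj_basis_mul_mul, mul_mul_conj_basis, mul_conj_basis_mul]

theorem conj_basis_of_isPure : ∀ {n : ℕ} {α : Finset ℕ}, IsPure n α →
    conj n (basis n α) = -basis n α
  | 0, _, ⟨hne, hsub⟩ => absurd (Finset.nonempty_Icc.1 (hne.mono hsub)) (by norm_num)
  | n + 1, α, ⟨hne, hsub⟩ => by
    by_cases hα : n + 1 ∈ α
    · refine Prod.ext ?_ rfl
      simp only [fst_conj, fst_neg, (basis_succ_of_mem hα).1, conj_zero, neg_zero]
    · obtain ⟨hfst, hsnd⟩ := basis_succ_of_notMem hα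
      rw [← Finset.insert_Icc_right_eq_Icc_add_one (Nat.le_add_left 1 n),
        Finset.subset_insert_iff_of_notMem hα] at hsub
      refine Prod.ext ?_ ?_ <;>
        simp only [fst_conj, snd_conj, fst_neg, snd_neg, hfst, hsnd,
          conj_basis_of_isPure ⟨hne, hsub⟩, neg_zero]

end CD

theorem stmt4_general (n : ℕ) (α β : Finset ℕ) (hα : CD.IsPure n α)
    (x y : CD n) (hx : x = CD.basis n α) (hy : y = CD.basis n β) :
    CD.mul1 n (CD.mul1 n y x) x = -y ∧
    CD.mul1 n x (CD.mul1 n x y) = -y ∧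
    CD.mul1 n (CD.mul1 n x y) x = CD.mul1 n x (CD.mul1 n y x) := by
  subst hx hy
  have hconj := CD.conj_basis_of_isPure hα
  refine ⟨?_, ?_, CD.flexible_basis n α _⟩
  · simpa only [hconj, CD.mul_neg, neg_eq_iff_eq_neg] using CD.mul_mul_conj_basis α (CD.basis n β)
  · simpa only [hconj, CD.neg_mul, neg_eq_iff_eq_neg] using CD.conj_basis_mul_mul α (CD.basis n β)

/-- With all `εᵢ = 1`, for distinct pure basis elements `x, y`:
`(y·x)·x = −y`, `x·(x·y) = −y`, and `(x·y)·x = x·(y·x)`. -/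
theorem stmt4 (n : ℕ) (α β : Finset ℕ) (hα : CD.IsPure n α) (hβ : CD.IsPure n β)
    (hne : α ≠ β) (x y : CD n) (hx : x = CD.basis n α) (hy : y = CD.basis n β) :
    CD.mul1 n (CD.mul1 n y x) x = -y ∧
    CD.mul1 n x (CD.mul1 n x y) = -y ∧
    CD.mul1 n (CD.mul1 n x y) x = CD.mul1 n x (CD.mul1 n y x) :=
  stmt4_general n α β hα x y hx hy
end
end
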